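/- arXiv:1310.4642 — 4 statements merged into one kernel-verified Lean document; each statement's English description precedes it below -/
import Mathlib

section
/- Let (W,S) be a Coxeter system, u = (s_1,...,s_l) a sequence of simple reflections, and γ = (γ_1,...,γ_l) a subexpression of u, i.e. γ_j ∈ {e, s_j} for all j. Then the product γ_1 γ_2 ⋯ γ_l is less than or equal to s_1 * s_2 * ⋯ * s_l in the Bruhat order, where * is the Demazure (monoid) product. -/
namespace DBS
open CoxeterSystem
open scoped Classical

variable {B W : Type*} [Group W] {M : CoxeterMatrix B} (cs : CoxeterSystem M W)

/-- Bruhat order on a Coxeter group: `u ≤ w` iff some reduced word for `w`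
has a subword with product `u`. -/
def bruhatLE (u w : W) : Prop :=
  ∃ ω : List B, cs.IsReduced ω ∧ cs.wordProd ω = w ∧
    ∃ ω' : List B, ω'.Sublist ω ∧ cs.wordProd ω' = u

/-- Strict Bruhat order. -/
def bruhatLT (u w : W) : Prop := bruhatLE cs u w ∧ u ≠ w

/-- Demazure product `s * w = max{sw, w}` in Bruhat order. -/
noncomputable def demL (i : B) (w : W) : W :=
  if bruhatLT cs w (cs.simple i * w) then cs.simple i * w else w

/-- `s ▷ w = min{sw, w}` in Bruhat order. -/
noncomputable def minL (i : B) (w : W) : W :=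
  if bruhatLT cs (cs.simple i * w) w then cs.simple i * w else w

/-- `w ◁ s = min{ws, w}` in Bruhat order. -/
noncomputable def demR (w : W) (i : B) : W :=
  if bruhatLT cs (w * cs.simple i) w then w * cs.simple i else w

/-- Demazure product `s₁ * (s₂ * (⋯ * s_l))` of a word of simple reflections. -/
noncomputable def dprodWord (ω : List B) : W := ω.foldr (demL cs) 1

/-- Demazure product of the sequence of simple reflections indexed by `u`. -/
noncomputable def dprodFn {l : ℕ} (u : Fin l → B) : W := dprodWord cs (List.ofFn u)

/-- Partial product `γ^j = γ₁ ⋯ γ_j`. -/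
noncomputable def pp {l : ℕ} (γ : Fin l → W) (j : ℕ) : W := ((List.ofFn γ).take j).prod

/-- `γ` is a subexpression of the word of simple reflections indexed by `u`. -/
def IsSubexpr {l : ℕ} (u : Fin l → B) (γ : Fin l → W) : Prop :=
  ∀ j : Fin l, γ j = 1 ∨ γ j = cs.simple (u j)

/-- `γ` is a positive subexpression: `γ^{j-1} = γ^j ◁ s_j` for all `j`. -/
def IsPositive {l : ℕ} (u : Fin l → B) (γ : Fin l → W) : Prop :=
  ∀ j : Fin l, pp γ (j : ℕ) = demR cs (pp γ ((j : ℕ) + 1)) (u j)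

/-! Let `u ≤ w` be the order generated by the steps `u < u t`, `t` a reflection with
`ℓ u < ℓ (u t)`. If `ℓ (w t) < ℓ w`, then `t` occurs an odd number of times in the right
inversion sequence of every word for `w`: that parity depends only on the product, as it is read
off from an action of `W` on `W × Bool`. This strong exchange condition lets a step `w t < w`
delete a letter of any word for `w`, so every `u ≤ w` is a subword product of every word for `w`.
Next, induction on the chain gives `s x ≤ w` or `s x ≤ s w` whenever `x ≤ w`; since
`s * w = max {w, s w}` dominates both, induction on the word puts every subword product of
`(s_1, …, s_l)` below the Demazure product. -/

noncomputable def reflAction (i : B) : Function.End (W × Bool) :=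
  fun p => (cs.simple i * p.1 * cs.simple i, p.2 ^^ decide (p.1 = cs.simple i))

theorem prod_map_reflAction (ω : List B) (p : W × Bool) :
    (ω.map (reflAction cs)).prod p =
      (cs.wordProd ω * p.1 * (cs.wordProd ω)⁻¹,
        p.2 ^^ decide (Odd ((cs.rightInvSeq ω).count p.1))) := by
  induction ω generalizing p with
  | nil => change p = (_, _); simp
  | cons i ω ih =>
    change reflAction cs i ((ω.map (reflAction cs)).prod p) = _
    have hconj : cs.wordProd ω * p.1 * (cs.wordProd ω)⁻¹ = cs.simple i ↔
        (cs.wordProd ω)⁻¹ * cs.simple i * cs.wordProd ω = p.1 := by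
      constructor <;> intro h <;> rw [← h] <;> group
    rw [ih, reflAction, Prod.mk.injEq]
    constructor
    · simp only [cs.wordProd_cons, mul_inv_rev, cs.inv_simple, mul_assoc]
    · simp only [CoxeterSystem.rightInvSeq, List.count_cons, beq_iff_eq, hconj]
      by_cases hc : (cs.wordProd ω)⁻¹ * cs.simple i * cs.wordProd ω = p.1 <;>
        simp [hc, Nat.odd_add_one, ← Nat.not_even_iff_odd]

theorem leftInvSeq_eq_map_conj_rightInvSeq (ω : List B) :
    cs.leftInvSeq ω = (cs.rightInvSeq ω).map (MulAut.conj (cs.wordProd ω)) := by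
  induction ω with
  | nil => rfl
  | cons i ω ih =>
    simp only [CoxeterSystem.rightInvSeq, CoxeterSystem.leftInvSeq, ih, List.map_cons,
      List.map_map, cs.wordProd_cons, MulAut.conj_apply]
    refine congrArg₂ _ (by simp [mul_assoc]) (List.map_congr_left fun x _ => ?_)
    simp [mul_assoc]

theorem wordProd_alternatingWord_two_mul (i j : B) :
    cs.wordProd (alternatingWord i j (2 * M i j)) = 1 := by
  rw [cs.prod_alternatingWord_eq_mul_pow, if_pos (even_two_mul _), one_mul,
    Nat.mul_div_cancel_left _ two_pos, cs.simple_mul_simple_pow]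

theorem even_count_rightInvSeq_alternatingWord_two_mul (i j : B) (t : W) :
    Even ((cs.rightInvSeq (alternatingWord i j (2 * M i j))).count t) := by
  let g : ℕ → W := fun k => cs.simple i * (cs.simple j * cs.simple i) ^ k
  have hlis : cs.leftInvSeq (alternatingWord i j (2 * M i j)) =
      (List.range (2 * M i j)).map g := by
    refine List.ext_getElem (by simp) fun k hk _ => ?_
    rw [cs.getElem_leftInvSeq_alternatingWord i j _ k (by simpa using hk), List.getElem_map,
      List.getElem_range, cs.prod_alternatingWord_eq_mul_pow]
    have hodd : ¬ Even (2 * k + 1) := by simp [parity_simps]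
    rw [if_neg hodd, show (2 * k + 1) / 2 = k by omega]
  have hg : ∀ k, g (M i j + k) = g k := fun k => by
    simp only [g, pow_add, M.symmetric i j, cs.simple_mul_simple_pow, one_mul]
  have hshift : g ∘ (M i j + ·) = g := funext hg
  rw [leftInvSeq_eq_map_conj_rightInvSeq, wordProd_alternatingWord_two_mul, map_one,
    MulAut.one_def, MulEquiv.coe_refl, List.map_id] at hlis
  rw [hlis, two_mul, List.range_add, List.map_append, List.map_map, hshift,
    List.count_append]
  exact ⟨_, rfl⟩

theorem isLiftable_reflAction : M.IsLiftable (reflAction cs) := by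
  intro i j
  have hpow : ∀ m, (reflAction cs i * reflAction cs j) ^ m =
      ((alternatingWord i j (2 * m)).map (reflAction cs)).prod := by
    intro m
    induction m with
    | zero => rfl
    | succ m ih =>
      rw [pow_succ', ih, show 2 * (m + 1) = 2 * m + 1 + 1 by ring, alternatingWord_succ',
        alternatingWord_succ']
      simp [parity_simps, mul_assoc]
  refine funext fun p => ?_
  have heven := even_count_rightInvSeq_alternatingWord_two_mul cs i j p.1
  rw [hpow, prod_map_reflAction, wordProd_alternatingWord_two_mul,
    decide_eq_false (Nat.not_odd_iff_even.mpr heven)]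
  change _ = p
  simp

theorem odd_count_rightInvSeq_iff {ω ω' : List B} (h : cs.wordProd ω = cs.wordProd ω') (t : W) :
    Odd ((cs.rightInvSeq ω).count t) ↔ Odd ((cs.rightInvSeq ω').count t) := by
  have hφ : ∀ ω : List B, cs.lift ⟨_, isLiftable_reflAction cs⟩ (cs.wordProd ω) =
      (ω.map (reflAction cs)).prod := fun ω => by
    rw [CoxeterSystem.wordProd, map_list_prod, List.map_map]
    congr 2
    exact funext (cs.lift_apply_simple (isLiftable_reflAction cs))
  have hflag := congrArg (fun w => (cs.lift ⟨_, isLiftable_reflAction cs⟩ w (t, false)).2) h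
  simpa [hφ, prod_map_reflAction] using hflag

theorem rightInvSeq_append (ω ω' : List B) :
    cs.rightInvSeq (ω ++ ω') =
      (cs.rightInvSeq ω).map (MulAut.conj (cs.wordProd ω')⁻¹) ++ cs.rightInvSeq ω' := by
  induction ω with
  | nil => rfl
  | cons i ω ih =>
    simp only [List.cons_append, CoxeterSystem.rightInvSeq, ih, List.map_cons, cs.wordProd_append,
      MulAut.conj_apply]
    simp [mul_assoc]

theorem odd_count_rightInvSeq_palindrome (c : List B) (k : B) :
    Odd ((cs.rightInvSeq (c ++ k :: c.reverse)).count
      (cs.wordProd c * cs.simple k * (cs.wordProd c)⁻¹)) := by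
  set g := cs.wordProd c
  have hcount : ∀ x : W, x * cs.simple k * x⁻¹ = g * cs.simple k * g⁻¹ →
      ((cs.rightInvSeq c).map (MulAut.conj x)).count (g * cs.simple k * g⁻¹) =
        (cs.rightInvSeq c).count (cs.simple k) := fun x hx => by
    rw [← hx, ← MulAut.conj_apply, List.count_map_of_injective _ _ (MulAut.conj x).injective]
  have hπ : (cs.wordProd (k :: c.reverse))⁻¹ = g * cs.simple k := by
    simp [g, cs.wordProd_cons]
  rw [rightInvSeq_append, List.count_append, hπ, CoxeterSystem.rightInvSeq, List.count_cons,
    cs.rightInvSeq_reverse, List.count_reverse, leftInvSeq_eq_map_conj_rightInvSeq,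
    hcount _ (by group), hcount _ rfl, if_pos (by simp [g]), ← add_assoc, ← two_mul]
  exact odd_two_mul_add_one _

theorem exists_odd_count_rightInvSeq {t : W} (ht : cs.IsReflection t) :
    ∃ ν : List B, cs.wordProd ν = t ∧ Odd ((cs.rightInvSeq ν).count t) := by
  obtain ⟨g, k, rfl⟩ := ht
  obtain ⟨c, rfl⟩ := cs.wordProd_surjective g
  exact ⟨c ++ k :: c.reverse, by simp [cs.wordProd_append, cs.wordProd_cons, mul_assoc],
    odd_count_rightInvSeq_palindrome cs c k⟩

/-- The strong exchange condition, for arbitrary words. -/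
theorem odd_count_rightInvSeq_of_length_mul_lt {t w : W} (ht : cs.IsReflection t)
    (hlt : cs.length (w * t) < cs.length w) {ω : List B} (hω : cs.wordProd ω = w) :
    Odd ((cs.rightInvSeq ω).count t) := by
  obtain ⟨ν, hν, hodd⟩ := exists_odd_count_rightInvSeq cs ht
  obtain ⟨μ, hμ, hμw⟩ := cs.exists_isReduced (w * t)
  have hμν : cs.wordProd ω = cs.wordProd (μ ++ ν) := by
    rw [cs.wordProd_append, hν, ← hμw, mul_assoc, ht.mul_self, mul_one, hω]
  have hμt : t ∉ cs.rightInvSeq μ := fun hmem => by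
    have := (cs.isRightInversion_of_mem_rightInvSeq hμ hmem).2
    rw [← hμw, mul_assoc, ht.mul_self, mul_one] at this
    omega
  have hμcount : ((cs.rightInvSeq μ).map (MulAut.conj (cs.wordProd ν)⁻¹)).count t = 0 := by
    have hfix : MulAut.conj (cs.wordProd ν)⁻¹ t = t := by
      rw [hν, MulAut.conj_apply, ht.inv]; group
    rw [← hfix, List.count_map_of_injective _ _ (MulAut.conj _).injective,
      List.count_eq_zero.mpr hμt]
  rwa [odd_count_rightInvSeq_iff cs hμν, rightInvSeq_append, List.count_append, hμcount,
    zero_add]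

theorem exists_wordProd_eraseIdx_eq_mul {t w : W} (ht : cs.IsReflection t)
    (hlt : cs.length (w * t) < cs.length w) {ω : List B} (hω : cs.wordProd ω = w) :
    ∃ k < ω.length, cs.wordProd (ω.eraseIdx k) = w * t := by
  have hmem : t ∈ cs.rightInvSeq ω :=
    List.count_pos_iff.mp (odd_count_rightInvSeq_of_length_mul_lt cs ht hlt hω).pos
  obtain ⟨k, hk, rfl⟩ := List.mem_iff_getElem.mp hmem
  refine ⟨k, by simpa using hk, ?_⟩
  rw [← cs.wordProd_mul_getD_rightInvSeq, List.getD_eq_getElem _ _ hk, hω]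

def BruhatStep (u w : W) : Prop :=
  ∃ t, cs.IsReflection t ∧ w = u * t ∧ cs.length u < cs.length w

def ChainLE : W → W → Prop := Relation.ReflTransGen (BruhatStep cs)

theorem ChainLE.exists_sublist {u w : W} (h : ChainLE cs u w) {ω : List B}
    (hω : cs.wordProd ω = w) : ∃ σ, σ.Sublist ω ∧ cs.wordProd σ = u := by
  induction h generalizing ω with
  | refl => exact ⟨ω, List.Sublist.refl ω, hω⟩
  | tail _ hstep ih =>
    obtain ⟨t, ht, rfl, hlt⟩ := hstep
    obtain ⟨k, -, hk⟩ := exists_wordProd_eraseIdx_eq_mul cs ht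
      (by rwa [mul_assoc, ht.mul_self, mul_one]) hω
    rw [mul_assoc, ht.mul_self, mul_one] at hk
    obtain ⟨σ, hσ, hσu⟩ := ih hk
    exact ⟨σ, hσ.trans (List.eraseIdx_sublist ω k), hσu⟩

theorem ChainLE.bruhatLE {u w : W} (h : ChainLE cs u w) : bruhatLE cs u w := by
  obtain ⟨ρ, hρ, rfl⟩ := cs.exists_isReduced w
  exact ⟨ρ, hρ, rfl, h.exists_sublist cs rfl⟩

theorem length_le_of_bruhatLE {u w : W} (h : bruhatLE cs u w) : cs.length u ≤ cs.length w := by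
  obtain ⟨ρ, hρ, rfl, σ, hσ, rfl⟩ := h
  calc cs.length (cs.wordProd σ) ≤ σ.length := cs.length_wordProd_le σ
    _ ≤ ρ.length := hσ.length_le
    _ = cs.length (cs.wordProd ρ) := hρ.symm

theorem bruhatStep_simple_mul {w : W} {i : B} (h : cs.length w < cs.length (cs.simple i * w)) :
    BruhatStep cs w (cs.simple i * w) :=
  ⟨w⁻¹ * cs.simple i * w, by simpa using (cs.isReflection_simple i).conj w⁻¹, by group, h⟩

theorem bruhatLT_simple_mul_iff {w : W} {i : B} :
    bruhatLT cs w (cs.simple i * w) ↔ cs.length w < cs.length (cs.simple i * w) := by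
  constructor
  · rintro ⟨hle, -⟩
    exact (length_le_of_bruhatLE cs hle).lt_of_ne (cs.length_simple_mul_ne w i).symm
  · intro h
    refine ⟨ChainLE.bruhatLE cs (.single (bruhatStep_simple_mul cs h)), ?_⟩
    exact fun heq => h.ne (congrArg cs.length heq)

theorem chainLE_demL (i : B) (w : W) :
    ChainLE cs w (demL cs i w) ∧ ChainLE cs (cs.simple i * w) (demL cs i w) := by
  rcases cs.length_simple_mul w i with hup | hdown
  · have hlt : cs.length w < cs.length (cs.simple i * w) := by omega
    rw [demL, if_pos (bruhatLT_simple_mul_iff cs |>.mpr hlt)]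
    exact ⟨.single (bruhatStep_simple_mul cs hlt), .refl⟩
  · have hlt : cs.length (cs.simple i * w) < cs.length (cs.simple i * (cs.simple i * w)) := by
      rw [cs.simple_mul_simple_cancel_left]; omega
    rw [demL, if_neg (by rw [bruhatLT_simple_mul_iff]; omega)]
    refine ⟨.refl, .single ?_⟩
    simpa using bruhatStep_simple_mul cs hlt

theorem simple_mul_mul_eq_or_length_mul_lt {v t : W} (i : B) (ht : cs.IsReflection t)
    (hv : cs.length v < cs.length (cs.simple i * v))
    (hlt : cs.length (cs.simple i * v * t) < cs.length (cs.simple i * v)) :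
    cs.simple i * v * t = v ∨ cs.length (v * t) < cs.length v := by
  obtain ⟨ρ, hρ, rfl⟩ := cs.exists_isReduced v
  obtain ⟨k, hk, hπ⟩ := exists_wordProd_eraseIdx_eq_mul cs ht hlt (cs.wordProd_cons i ρ)
  cases k with
  | zero => exact .inl hπ.symm
  | succ k =>
    right
    rw [List.eraseIdx_cons_succ, cs.wordProd_cons, mul_assoc, mul_right_inj] at hπ
    rw [← hπ, hρ]
    calc
      cs.length (cs.wordProd (ρ.eraseIdx k))
      _ ≤ (ρ.eraseIdx k).length := cs.length_wordProd_le _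
      _ < ρ.length := by rw [List.length_eraseIdx_of_lt (by simpa using hk)]; simp at hk; omega

theorem ChainLE.simple_mul {x w : W} (i : B) (h : ChainLE cs x w) :
    ChainLE cs (cs.simple i * x) w ∨ ChainLE cs (cs.simple i * x) (cs.simple i * w) := by
  induction h with
  | refl => exact .inr .refl
  | @tail v w _ hstep ih =>
    obtain ⟨t, ht, rfl, hvw⟩ := hstep
    rcases ih with hxv | hxv
    · exact .inl (hxv.tail ⟨t, ht, rfl, hvw⟩)
    rw [← mul_assoc]
    by_cases hup : cs.length (cs.simple i * v) < cs.length (cs.simple i * v * t)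
    · exact .inr (hxv.tail ⟨t, ht, rfl, hup⟩)
    have hdown : cs.length (cs.simple i * v * t) < cs.length (cs.simple i * v) :=
      lt_of_le_of_ne (not_lt.mp hup) (ht.length_mul_left_ne _)
    have hv : cs.length v < cs.length (cs.simple i * v) := by
      rw [mul_assoc] at hdown
      rcases cs.length_simple_mul v i with h1 | h1 <;>
        rcases cs.length_simple_mul (v * t) i with h2 | h2 <;> omega
    rcases simple_mul_mul_eq_or_length_mul_lt cs i ht hv hdown with heq | hlt
    · have hw : v * t = cs.simple i * v := by
        calc v * t = cs.simple i * v * t * t := by rw [heq]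
          _ = cs.simple i * v := by rw [mul_assoc _ t t, ht.mul_self, mul_one]
      exact .inl (hw ▸ hxv)
    · omega

theorem chainLE_dprodWord_of_sublist {ω τ : List B} (hτ : τ.Sublist ω) :
    ChainLE cs (cs.wordProd τ) (dprodWord cs ω) := by
  induction ω generalizing τ with
  | nil => rw [List.sublist_nil.mp hτ]; exact .refl
  | cons i ω ih =>
    change ChainLE cs _ (demL cs i (dprodWord cs ω))
    obtain ⟨hle, hle'⟩ := chainLE_demL cs i (dprodWord cs ω)
    rcases List.sublist_cons_iff.mp hτ with hτ | ⟨τ₀, rfl, hτ₀⟩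
    · exact (ih hτ).trans hle
    · rw [cs.wordProd_cons]
      rcases (ih hτ₀).simple_mul cs i with h | h
      · exact h.trans hle
      · exact h.trans hle'

theorem exists_sublist_wordProd_eq_prod {ω : List B} {γ : List W}
    (h : List.Forall₂ (fun g i => g = 1 ∨ g = cs.simple i) γ ω) :
    ∃ τ : List B, τ.Sublist ω ∧ cs.wordProd τ = γ.prod := by
  induction h with
  | nil => exact ⟨[], .refl _, rfl⟩
  | @cons g i γ ω hg _ ih =>
    obtain ⟨τ, hτ, hπ⟩ := ih
    rcases hg with rfl | rfl
    · exact ⟨τ, hτ.cons i, by rw [hπ, List.prod_cons, one_mul]⟩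
    · exact ⟨i :: τ, hτ.cons_cons i, by rw [cs.wordProd_cons, hπ, List.prod_cons]⟩

/-- The product of a subexpression of `(s_1, …, s_l)` is at most the Demazure
product `s_1 * ⋯ * s_l` in Bruhat order. -/
theorem subexpr_prod_le_demazure {l : ℕ} (u : Fin l → B) (γ : Fin l → W)
    (hγ : IsSubexpr cs u γ) :
    bruhatLE cs ((List.ofFn γ).prod) (dprodFn cs u) := by
  have hforall :
      List.Forall₂ (fun g i => g = 1 ∨ g = cs.simple i) (List.ofFn γ) (List.ofFn u) :=
    List.forall₂_iff_get.mpr ⟨by simp, fun k hk _ => by simpa using hγ ⟨k, by simpa using hk⟩⟩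
  obtain ⟨τ, hτ, hπ⟩ := exists_sublist_wordProd_eq_prod cs hforall
  exact hπ ▸ ChainLE.bruhatLE cs (chainLE_dprodWord_of_sublist cs hτ)

end DBS
end

section
/- Let G be a simply connected complex semisimple group, α a simple root with fundamental weight λ_α. For any z ∈ ℂ and g ∈ G, Δ_{λ_α}(x_α(z) g) = Δ_{λ_α}(g) + z Δ_{s_α λ_α, λ_α}(g), where x_α(z) = exp(z e_α) and Δ denotes the generalized minor. -/
/-!
Left multiplication by `x_α(z) = 1 + z E_{i,i+1}` adds `z` times row `i+1` to row `i`. The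
leading `i × i` minor is linear in its `i`-th row, so it splits into the old minor plus `z` times
the minor whose `i`-th row is replaced by row `i+1`, which is `Δ_{s_α λ_α, λ_α}`.
-/

open Matrix Function

namespace Matrix

variable {m n o α R : Type*} [DecidableEq m]

theorem updateRow_submatrix_eq_submatrix_update (g : Matrix n o α) (f : m → n) (e : m → o)
    (k : m) (q : n) :
    (g.submatrix f e).updateRow k (fun b => g q (e b)) = g.submatrix (update f k q) e := by
  ext a b
  rcases eq_or_ne a k with rfl | hak
  · simp
  · simp [hak]

variable [CommRing R] [Fintype n] [DecidableEq n]

theorem submatrix_transvection_mul {f : m → n} (hf : Injective f) (k : m) (q : n) (c : R)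
    (g : Matrix n o R) (e : m → o) :
    (transvection (f k) q c * g).submatrix f e =
      (g.submatrix f e).updateRow k (g.submatrix f e k + c • fun b => g q (e b)) := by
  ext a b
  rcases eq_or_ne a k with rfl | hak
  · simp
  · simp [hak, hf.ne hak]

theorem det_submatrix_transvection_mul [Fintype m] {f : m → n} (hf : Injective f) (k : m)
    (q : n) (c : R) (g : Matrix n n R) (e : m → n) :
    ((transvection (f k) q c * g).submatrix f e).det =
      (g.submatrix f e).det + c * (g.submatrix (update f k q) e).det := by
  rw [submatrix_transvection_mul hf, det_updateRow_add, det_updateRow_smul, updateRow_eq_self,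
    updateRow_submatrix_eq_submatrix_update]

end Matrix

/-- Model: `G = SL(n,ℂ)`, `α` the `i`-th simple root (1-indexed), `Δ_{λ_α}` the leading
principal `i × i` minor, and `Δ_{s_α λ_α, λ_α}` the minor with rows `{1,…,i-1,i+1}` and
columns `{1,…,i}`. -/
theorem minor_expansion (n i : ℕ) (hi : 1 ≤ i) (hin : i < n) (z : ℂ)
    (g : Matrix (Fin n) (Fin n) ℂ) :
    (((1 + z • Matrix.single (⟨i - 1, by omega⟩ : Fin n)
          (⟨i, hin⟩ : Fin n) (1 : ℂ)) * g).submatrix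
        (Fin.castLE hin.le) (Fin.castLE hin.le)).det =
      (g.submatrix (Fin.castLE hin.le) (Fin.castLE hin.le)).det +
        z * (g.submatrix
          (fun j : Fin i => if (j : ℕ) = i - 1 then (⟨i, hin⟩ : Fin n)
            else ⟨(j : ℕ), lt_trans j.isLt hin⟩)
          (Fin.castLE hin.le)).det := by
  set last : Fin i := ⟨i - 1, by omega⟩
  have hx : 1 + z • Matrix.single (⟨i - 1, by omega⟩ : Fin n) ⟨i, hin⟩ 1 =
      transvection (Fin.castLE hin.le last) ⟨i, hin⟩ z := by
    rw [transvection, smul_single, smul_eq_mul, mul_one]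
    rfl
  have hrows : (fun j : Fin i => if (j : ℕ) = i - 1 then (⟨i, hin⟩ : Fin n)
      else ⟨(j : ℕ), lt_trans j.isLt hin⟩) = update (Fin.castLE hin.le) last ⟨i, hin⟩ := by
    ext j
    simp only [update_apply, last, Fin.ext_iff]
    split_ifs <;> rfl
  rw [hx, hrows, det_submatrix_transvection_mul (Fin.castLE_injective hin.le)]
end

section
/- Let V be a vector space over a field K, v_1,...,v_n ∈ V, φ_1,...,φ_n ∈ V*, and for 1 ≤ k < j ≤ n suppose given linear operators M_{jk} on V. Let m be the n×n lower triangular matrix with diagonal entries 1 and m_{jk} = φ_k(M_{jk} v_j) for k < j, and let l = m^{-1}. Then there exist linear operators L_{jk} on V, defined recursively by L_{jk}(x) = -Σ_{i=k+1}^{j-1} φ_i(L_{ji} x) M_{ik} v_i - M_{jk} x, such that l_{jk} = φ_k(L_{jk} v_j) for all 1 ≤ k < j ≤ n. -/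
/-!
A lower unitriangular `l` is a left inverse of the lower unitriangular `m` as soon as, below the
diagonal, `l_{jk} = -∑_{k<i<j} l_{ji} m_{ik} - m_{jk}`. Applying `φ_k` to the recursion defining
`L_{jk}`, evaluated at `v_j`, shows that `φ_k(L_{jk} v_j)` satisfies this same recursion.
-/

open Finset

namespace Matrix

variable {ι R : Type*} [LinearOrder ι]

def unitLowerTriangular [Zero R] [One R] (f : ι → ι → R) : Matrix ι ι R :=
  fun j k => if j = k then 1 else if k < j then f j k else 0

variable [Fintype ι] [LocallyFiniteOrder ι]

section Ring

variable [Ring R]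

theorem unitLowerTriangular_mul_apply (a b : ι → ι → R) (j k : ι) :
    (unitLowerTriangular b * unitLowerTriangular a) j k =
      ∑ i ∈ Icc k j, unitLowerTriangular b j i * unitLowerTriangular a i k := by
  rw [mul_apply]
  refine (sum_subset (subset_univ _) fun i _ hi => ?_).symm
  rw [mem_Icc, not_and_or, not_le, not_le] at hi
  rcases hi with hik | hji
  · simp [unitLowerTriangular, hik.ne, hik.not_gt]
  · simp [unitLowerTriangular, hji.ne, hji.not_gt]

theorem unitLowerTriangular_mul_eq_one {a b : ι → ι → R}
    (hb : ∀ j k, k < j → b j k = -(∑ i ∈ Ioo k j, b j i * a i k) - a j k) :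
    unitLowerTriangular b * unitLowerTriangular a = 1 := by
  ext j k
  rw [unitLowerTriangular_mul_apply]
  rcases lt_trichotomy j k with hjk | rfl | hkj
  · simp [Icc_eq_empty_of_lt hjk, one_apply_ne hjk.ne]
  · simp [unitLowerTriangular]
  · have hIoo : ∀ i ∈ Ioo k j,
        unitLowerTriangular b j i * unitLowerTriangular a i k = b j i * a i k := by
      intro i hi
      obtain ⟨hki, hij⟩ := mem_Ioo.mp hi
      simp [unitLowerTriangular, hki, hij, hki.ne', hij.ne']
    rw [Icc_eq_cons_Ioc hkj.le, sum_cons, Ioc_eq_cons_Ioo hkj, sum_cons, sum_congr rfl hIoo,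
      one_apply_ne hkj.ne']
    simp only [unitLowerTriangular, ↓reduceIte, hkj.ne', hkj, mul_one, one_mul]
    rw [hb j k hkj]
    abel

end Ring

theorem inv_unitLowerTriangular [CommRing R] {a b : ι → ι → R}
    (hb : ∀ j k, k < j → b j k = -(∑ i ∈ Ioo k j, b j i * a i k) - a j k) :
    (unitLowerTriangular a)⁻¹ = unitLowerTriangular b :=
  inv_eq_left_inv (unitLowerTriangular_mul_eq_one hb)

end Matrix

section LowerInvOp

variable {K V : Type*} [CommRing K] [AddCommGroup V] [Module K V] {n : ℕ}

noncomputable def lowerInvOp (v : Fin n → V) (φ : Fin n → V →ₗ[K] K)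
    (Mop : Fin n → Fin n → V →ₗ[K] V) (j k : Fin n) : V →ₗ[K] V :=
  -(∑ i ∈ (Ioo k j).attach,
      ((φ i).comp (lowerInvOp v φ Mop j i)).smulRight (Mop i k (v i))) - Mop j k
termination_by (j : ℕ) - k
decreasing_by
  obtain ⟨hki, hij⟩ := mem_Ioo.mp i.2
  simp only [Fin.lt_def] at hki hij
  omega

theorem lowerInvOp_apply (v : Fin n → V) (φ : Fin n → V →ₗ[K] K)
    (Mop : Fin n → Fin n → V →ₗ[K] V) (j k : Fin n) (x : V) :
    lowerInvOp v φ Mop j k x =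
      -(∑ i ∈ Ioo k j, φ i (lowerInvOp v φ Mop j i x) • Mop i k (v i)) - Mop j k x := by
  rw [lowerInvOp]
  simp only [LinearMap.sub_apply, LinearMap.neg_apply, LinearMap.coe_sum, Finset.sum_apply,
    LinearMap.smulRight_apply, LinearMap.comp_apply]
  rw [sum_attach (Ioo k j) fun i => φ i (lowerInvOp v φ Mop j i x) • Mop i k (v i)]

end LowerInvOp

/-- Lemma 4.12: given vectors `v_j`, functionals `φ_k`, and operators `M_{jk}`, let
`m` be the lower triangular matrix with unit diagonal and `m_{jk} = φ_k(M_{jk} v_j)`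
for `k < j`. Then there exist operators `L_{jk}`, defined recursively by
`L_{jk}(x) = -Σ_{i=k+1}^{j-1} φ_i(L_{ji} x) M_{ik} v_i - M_{jk} x`, with
`(m⁻¹)_{jk} = φ_k(L_{jk} v_j)` for all `k < j`. -/
theorem inverse_unitriangular_entries (K : Type*) [Field K] (V : Type*)
    [AddCommGroup V] [Module K V] (n : ℕ) (v : Fin n → V)
    (φ : Fin n → (V →ₗ[K] K)) (Mop : Fin n → Fin n → (V →ₗ[K] V))
    (m : Matrix (Fin n) (Fin n) K)
    (hm : ∀ j k : Fin n,
      m j k = if j = k then 1 else if k < j then φ k (Mop j k (v j)) else 0) :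
    ∃ Lop : Fin n → Fin n → (V →ₗ[K] V),
      (∀ j k : Fin n, k < j → ∀ x : V,
        Lop j k x =
          -(∑ i ∈ Finset.Ioo k j, φ i (Lop j i x) • Mop i k (v i)) - Mop j k x) ∧
      ∀ j k : Fin n, k < j → m⁻¹ j k = φ k (Lop j k (v j)) := by
  refine ⟨lowerInvOp v φ Mop, fun j k _ x => lowerInvOp_apply v φ Mop j k x, fun j k hkj => ?_⟩
  have hm' : m = Matrix.unitLowerTriangular fun j k => φ k (Mop j k (v j)) := by
    ext j k
    exact hm j k
  have hinv : m⁻¹ = Matrix.unitLowerTriangular fun j k => φ k (lowerInvOp v φ Mop j k (v j)) := by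
    rw [hm']
    refine Matrix.inv_unitLowerTriangular fun j k _ => ?_
    rw [lowerInvOp_apply, map_sub, map_neg, map_sum]
    simp only [map_smul, smul_eq_mul]
  simp [hinv, Matrix.unitLowerTriangular, hkj, hkj.ne']
end

section
/- Let (W,S) be a Coxeter system and let γ = (γ_1,...,γ_n) be a subexpression of a sequence (s_1,...,s_n) of simple reflections (γ_j ∈ {e,s_j}). Define partial products γ^0 = e, γ^j = γ^{j-1} γ_j, and let J(γ) = { j ∈ [1,n] : (γ^j)^{-1} applied to the simple root α_j is negative, i.e. γ^j s_j < γ^j }. Then l(γ^n) ≤ |J(γ)|, with equality if and only if γ is positive (γ^{j-1} = γ^j ◁ s_j for all j). -/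
namespace DBS
open CoxeterSystem
open scoped Classical

variable {B W : Type*} [Group W] {M : CoxeterMatrix B} (cs : CoxeterSystem M W)

private lemma simple_ne_one' (i : B) : cs.simple i ≠ 1 := by
  intro h
  have h1 := cs.length_simple i
  rw [h, cs.length_one] at h1
  exact one_ne_zero h1.symm

private lemma mul_simple_ne (w : W) (i : B) : w * cs.simple i ≠ w := by
  intro h
  exact simple_ne_one' cs i (mul_eq_left.mp h)

/-- The key characterization: `w·s < w` in Bruhat order iff the length decreases. -/
private lemma bruhatLT_mul_simple_iff (w : W) (i : B) :
    bruhatLT cs (w * cs.simple i) w ↔ cs.length (w * cs.simple i) < cs.length w := by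
  constructor
  · rintro ⟨⟨ω, hred, hw, ω', hsl, hprod⟩, _⟩
    have h1 : cs.length (w * cs.simple i) ≤ cs.length w := by
      calc cs.length (w * cs.simple i) = cs.length (cs.wordProd ω') := by rw [hprod]
        _ ≤ ω'.length := cs.length_wordProd_le ω'
        _ ≤ ω.length := hsl.length_le
        _ = cs.length w := by rw [← hw]; exact hred.symm
    exact lt_of_le_of_ne h1 (cs.length_mul_simple_ne w i)
  · intro h
    obtain ⟨ω', hlen, hprod⟩ := cs.exists_reduced_word (w * cs.simple i)
    have hω : cs.wordProd (ω' ++ [i]) = w := by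
      rw [cs.wordProd_append, cs.wordProd_singleton, ← hprod,
        cs.simple_mul_simple_cancel_right]
    have hlw : cs.length w = cs.length (w * cs.simple i) + 1 := by
      rcases cs.length_mul_simple w i with h' | h' <;> omega
    refine ⟨⟨ω' ++ [i], ?_, hω, ω', List.sublist_append_left _ _, hprod.symm⟩, ?_⟩
    · unfold CoxeterSystem.IsReduced
      rw [hω, List.length_append, List.length_singleton, hlw, hprod,
        show cs.length (cs.wordProd ω') = ω'.length from hlen]
    · exact mul_simple_ne cs w i

private lemma pp_zero {l : ℕ} (γ : Fin l → W) : pp γ 0 = 1 := by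
  simp [pp]

private lemma pp_succ {l : ℕ} (γ : Fin l → W) (m : ℕ) (hm : m < l) :
    pp γ (m + 1) = pp γ m * γ ⟨m, hm⟩ := by
  unfold pp
  rw [List.prod_take_succ _ m (by simpa using hm)]
  congr 1
  simp

private lemma pp_top {l : ℕ} (γ : Fin l → W) : pp γ l = (List.ofFn γ).prod := by
  unfold pp
  rw [List.take_of_length_le (by simp)]

/-- The predicate defining `J(γ)`: `γ^j s_j < γ^j`. -/
private def Pred {l : ℕ} (u : Fin l → B) (γ : Fin l → W) (j : Fin l) : Prop :=
  bruhatLT cs (pp γ ((j : ℕ) + 1) * cs.simple (u j)) (pp γ ((j : ℕ) + 1))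

/-- The main induction. -/
private lemma main_aux {l : ℕ} (u : Fin l → B) (γ : Fin l → W)
    (hsub : IsSubexpr cs u γ) : ∀ m, m ≤ l →
    (cs.length (pp γ m) ≤
      (Finset.univ.filter (fun j : Fin l => (j : ℕ) < m ∧ Pred cs u γ j)).card ∧
    (cs.length (pp γ m) =
      (Finset.univ.filter (fun j : Fin l => (j : ℕ) < m ∧ Pred cs u γ j)).card ↔
      ∀ j : Fin l, (j : ℕ) < m → pp γ (j : ℕ) = demR cs (pp γ ((j : ℕ) + 1)) (u j))) := by
  intro m
  induction m with
  | zero =>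
    intro _
    have he : (Finset.univ.filter (fun j : Fin l => (j : ℕ) < 0 ∧ Pred cs u γ j)) = ∅ := by
      apply Finset.filter_false_of_mem
      intro j _
      simp
    rw [he, pp_zero, cs.length_one]
    refine ⟨le_refl 0, ?_⟩
    simp only [Finset.card_empty, true_iff]
    intro j hj
    omega
  | succ m ih =>
    intro hml
    have hm : m < l := hml
    obtain ⟨ihle, ihiff⟩ := ih (le_of_lt hml)
    have hjv : ((⟨m, hm⟩ : Fin l) : ℕ) = m := rfl
    -- split of the "all steps" condition
    have hsplit : (∀ j : Fin l, (j : ℕ) < m + 1 →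
          pp γ (j : ℕ) = demR cs (pp γ ((j : ℕ) + 1)) (u j)) ↔
        ((∀ j : Fin l, (j : ℕ) < m →
          pp γ (j : ℕ) = demR cs (pp γ ((j : ℕ) + 1)) (u j)) ∧
          pp γ m = demR cs (pp γ (m + 1)) (u ⟨m, hm⟩)) := by
      constructor
      · intro h
        exact ⟨fun j hj => h j (by omega), h ⟨m, hm⟩ (by omega)⟩
      · rintro ⟨h1, h2⟩ j hj
        rcases Nat.lt_or_ge (j : ℕ) m with hlt | hge
        · exact h1 j hlt
        · have hje : j = ⟨m, hm⟩ := Fin.ext (by omega)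
          rw [hje]
          exact h2
    -- cardinality step
    have hcard_pos : Pred cs u γ ⟨m, hm⟩ →
        (Finset.univ.filter (fun j : Fin l => (j : ℕ) < m + 1 ∧ Pred cs u γ j)).card =
        (Finset.univ.filter (fun j : Fin l => (j : ℕ) < m ∧ Pred cs u γ j)).card + 1 := by
      intro hPj
      have hset : (Finset.univ.filter (fun j : Fin l => (j : ℕ) < m + 1 ∧ Pred cs u γ j)) =
          insert (⟨m, hm⟩ : Fin l)
            (Finset.univ.filter (fun j : Fin l => (j : ℕ) < m ∧ Pred cs u γ j)) := by
        ext j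
        simp only [Finset.mem_filter, Finset.mem_univ, true_and, Finset.mem_insert]
        constructor
        · rintro ⟨hj, hPj'⟩
          rcases Nat.lt_or_ge (j : ℕ) m with hlt | hge
          · exact Or.inr ⟨hlt, hPj'⟩
          · exact Or.inl (Fin.ext (by omega))
        · rintro (rfl | ⟨hj, hPj'⟩)
          · exact ⟨by omega, hPj⟩
          · exact ⟨by omega, hPj'⟩
      rw [hset, Finset.card_insert_of_notMem (by simp [hjv])]
    have hcard_neg : ¬ Pred cs u γ ⟨m, hm⟩ →
        (Finset.univ.filter (fun j : Fin l => (j : ℕ) < m + 1 ∧ Pred cs u γ j)).card =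
        (Finset.univ.filter (fun j : Fin l => (j : ℕ) < m ∧ Pred cs u γ j)).card := by
      intro hPj
      congr 1
      ext j
      simp only [Finset.mem_filter, Finset.mem_univ, true_and]
      constructor
      · rintro ⟨hj, hPj'⟩
        rcases Nat.lt_or_ge (j : ℕ) m with hlt | hge
        · exact ⟨hlt, hPj'⟩
        · exact absurd hPj'
            (by have hje : j = ⟨m, hm⟩ := Fin.ext (by omega); rw [hje]; exact hPj)
      · rintro ⟨hj, hPj'⟩
        exact ⟨by omega, hPj'⟩
    have hb : pp γ (m + 1) = pp γ m * γ ⟨m, hm⟩ := pp_succ γ m hm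
    have hPiff : Pred cs u γ ⟨m, hm⟩ ↔ bruhatLT cs
        (pp γ (m + 1) * cs.simple (u ⟨m, hm⟩)) (pp γ (m + 1)) := Iff.rfl
    rcases hsub ⟨m, hm⟩ with h1 | h2
    · -- γ_m = 1 : partial product unchanged
      have hbb : pp γ (m + 1) = pp γ m := by rw [hb, h1, mul_one]
      by_cases hPj : Pred cs u γ ⟨m, hm⟩
      · -- length unchanged, count increases: strict inequality, positivity fails
        rw [hcard_pos hPj, hbb]
        refine ⟨by omega, ?_⟩
        constructor
        · intro h; omega
        · intro h
          exfalso
          have hstep := (hsplit.mp h).2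
          rw [demR, if_pos (hPiff.mp hPj), hbb] at hstep
          exact mul_simple_ne cs (pp γ m) (u ⟨m, hm⟩) hstep.symm
      · -- length and count unchanged; step at m holds
        have hstep : pp γ m = demR cs (pp γ (m + 1)) (u ⟨m, hm⟩) := by
          rw [demR, if_neg (fun hc => hPj (hPiff.mpr hc)), hbb]
        rw [hcard_neg hPj, hbb]
        refine ⟨ihle, ?_⟩
        rw [hsplit]
        constructor
        · intro h; exact ⟨ihiff.mp h, hstep⟩
        · rintro ⟨h, _⟩; exact ihiff.mpr h
    · -- γ_m = s
      have hbb : pp γ (m + 1) = pp γ m * cs.simple (u ⟨m, hm⟩) := by rw [hb, h2]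
      have hbs : pp γ (m + 1) * cs.simple (u ⟨m, hm⟩) = pp γ m := by
        rw [hbb, cs.simple_mul_simple_cancel_right]
      have hdich := cs.length_mul_simple (pp γ m) (u ⟨m, hm⟩)
      rw [← hbb] at hdich
      by_cases hPj : Pred cs u γ ⟨m, hm⟩
      · -- length increases by 1, count increases by 1; step holds
        have hlt' := (bruhatLT_mul_simple_iff cs (pp γ (m + 1)) (u ⟨m, hm⟩)).mp
          (hPiff.mp hPj)
        rw [hbs] at hlt'
        have hlen : cs.length (pp γ (m + 1)) = cs.length (pp γ m) + 1 := by omega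
        have hstep : pp γ m = demR cs (pp γ (m + 1)) (u ⟨m, hm⟩) := by
          rw [demR, if_pos (hPiff.mp hPj), hbs]
        rw [hcard_pos hPj, hlen]
        constructor
        · omega
        constructor
        · intro h
          rw [hsplit]
          exact ⟨ihiff.mp (by omega), hstep⟩
        · intro h
          have := ihiff.mpr (hsplit.mp h).1
          omega
      · -- length decreases by 1, count unchanged: strict inequality, positivity fails
        have hnlt : ¬ cs.length (pp γ m) < cs.length (pp γ (m + 1)) := by
          intro hc
          apply hPj
          apply hPiff.mpr
          apply (bruhatLT_mul_simple_iff cs (pp γ (m + 1)) (u ⟨m, hm⟩)).mpr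
          rw [hbs]
          exact hc
        have hlen : cs.length (pp γ m) = cs.length (pp γ (m + 1)) + 1 := by omega
        rw [hcard_neg hPj]
        refine ⟨by omega, ?_⟩
        constructor
        · intro h; omega
        · intro h
          exfalso
          have hstep := (hsplit.mp h).2
          rw [demR, if_neg (fun hc => hPj (hPiff.mpr hc)), hbb] at hstep
          exact mul_simple_ne cs (pp γ m) (u ⟨m, hm⟩) hstep.symm

/-- For a subexpression `γ` of `(s_1,…,s_n)` with `J(γ) = {j : γ^j s_j < γ^j}`,
one has `l(γ^n) ≤ |J(γ)|`, with equality iff `γ` is positive. -/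
theorem length_le_card_J {l : ℕ} (u : Fin l → B) (γ : Fin l → W)
    (hsub : IsSubexpr cs u γ) :
    cs.length ((List.ofFn γ).prod) ≤
      Nat.card {j : Fin l // bruhatLT cs
        (pp γ ((j : ℕ) + 1) * cs.simple (u j)) (pp γ ((j : ℕ) + 1))} ∧
    (cs.length ((List.ofFn γ).prod) =
      Nat.card {j : Fin l // bruhatLT cs
        (pp γ ((j : ℕ) + 1) * cs.simple (u j)) (pp γ ((j : ℕ) + 1))} ↔
      IsPositive cs u γ) := by
  obtain ⟨h1, h2⟩ := main_aux cs u γ hsub l (le_refl l)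
  have hcard : Nat.card {j : Fin l // bruhatLT cs
        (pp γ ((j : ℕ) + 1) * cs.simple (u j)) (pp γ ((j : ℕ) + 1))} =
      (Finset.univ.filter (fun j : Fin l => (j : ℕ) < l ∧ Pred cs u γ j)).card := by
    rw [Nat.card_eq_fintype_card, Fintype.card_subtype]
    congr 1
    ext j
    simp [j.isLt, Pred]
  have hpos : (∀ j : Fin l, (j : ℕ) < l →
        pp γ (j : ℕ) = demR cs (pp γ ((j : ℕ) + 1)) (u j)) ↔ IsPositive cs u γ := by
    constructor
    · intro h j; exact h j j.isLt
    · intro h j _; exact h j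
  rw [pp_top] at h1 h2
  rw [hcard]
  exact ⟨h1, h2.trans hpos⟩

end DBS
end
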